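/- arXiv:1609.03088 — 2 statements merged into one kernel-verified Lean document; each statement's English description precedes it below -/
import Mathlib

section
/- For any initial vector y_0 ∈ ℂ^m, the alternating projections sequence defined by y_{k+1} = (A A†)(b ⊙ phase(y_k)) is bounded, and every accumulation point y_∞ of the sequence (y_k) satisfies: there exists u ∈ E_phase(y_∞) such that (A A†)(b ⊙ u) = y_∞. In particular, if y_∞ has no zero entry, then (A A†)(b ⊙ phase(y_∞)) = y_∞. -/
open MeasureTheory ProbabilityTheory Filter Matrix Finset

noncomputable section

/-- phase of a complex number: z/|z|, with phase(0)=1. -/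
def phase (z : ℂ) : ℂ := if z = 0 then 1 else z / ‖z‖

/-- Euclidean norm of a complex vector. -/
def vnorm {k : ℕ} (v : Fin k → ℂ) : ℝ := Real.sqrt (∑ i, ‖v i‖ ^ 2)

/-- Hermitian inner product on ℂ^k. -/
def vinner {k : ℕ} (x y : Fin k → ℂ) : ℂ := ∑ i, (starRingEnd ℂ) (x i) * y i

/-- Moore–Penrose pseudoinverse, via the limit formula A† = lim_{δ→0⁺} (AᴴA + δI)⁻¹Aᴴ. -/
def pinv {m n : ℕ} (A : Matrix (Fin m) (Fin n) ℂ) : Matrix (Fin n) (Fin m) ℂ :=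
  limUnder (nhdsWithin (0:ℝ) (Set.Ioi 0))
    (fun δ : ℝ => (Aᴴ * A + (δ : ℂ) • (1 : Matrix (Fin n) (Fin n) ℂ))⁻¹ * Aᴴ)

/-- standard complex Gaussian: real and imaginary parts independent N(0,1/2). -/
def stdCGaussian : Measure ℂ :=
  ((gaussianReal 0 (1/2)).prod (gaussianReal 0 (1/2))).map
    (fun p : ℝ × ℝ => (p.1 : ℂ) + (p.2 : ℂ) * Complex.I)

instance : IsProbabilityMeasure stdCGaussian := by
  unfold stdCGaussian
  exact Measure.isProbabilityMeasure_map (by fun_prop)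

/-- law of a random m×n matrix with iid standard complex Gaussian entries. -/
def gaussMatrix (m n : ℕ) : Measure (Fin m → Fin n → ℂ) :=
  Measure.pi fun _ : Fin m => Measure.pi fun _ : Fin n => stdCGaussian

instance (m n : ℕ) : IsProbabilityMeasure (gaussMatrix m n) := by
  unfold gaussMatrix; infer_instance

/-- the vector b = |A x₀| (as a complex vector with real entries). -/
def bvec {m n : ℕ} (A : Matrix (Fin m) (Fin n) ℂ) (x₀ : Fin n → ℂ) : Fin m → ℂ :=
  fun i => (‖A.mulVec x₀ i‖ : ℂ)

/-- one step of alternating projections: z ↦ A†(b ⊙ phase(A z)). -/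
def apStep {m n : ℕ} (A : Matrix (Fin m) (Fin n) ℂ) (b : Fin m → ℂ) (z : Fin n → ℂ) :
    Fin n → ℂ :=
  (pinv A).mulVec (fun i => b i * phase (A.mulVec z i))

/-- distance to x up to global phase: inf_φ ‖e^{iφ}x₀ − x‖. -/
def pdist {k : ℕ} (x₀ x : Fin k → ℂ) : ℝ :=
  ⨅ φ : ℝ, vnorm (fun i => Complex.exp (φ * Complex.I) * x₀ i - x i)

/-- E_phase(z): the set of admissible phases of z. -/
def Ephase (z : ℂ) : Set ℂ :=
  if z = 0 then {u : ℂ | ‖u‖ = 1} else {z / ‖z‖}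

section Aux
open Complex ComplexConjugate

lemma abs_phase (z : ℂ) : ‖phase z‖ = 1 := by
  unfold phase
  split
  · simp
  · rename_i h
    rw [norm_div, Complex.norm_real, Real.norm_eq_abs, _root_.abs_of_nonneg (norm_nonneg z),
      div_self (norm_ne_zero_iff.mpr h)]

lemma phase_of_ne (z : ℂ) (h : z ≠ 0) : phase z = z / ‖z‖ := by
  unfold phase; rw [if_neg h]

lemma abs_sub_phase_mul (b : ℝ) (hb : 0 ≤ b) (z : ℂ) :
    ‖(z - (b : ℂ) * phase z)‖ = |‖z‖ - b| := by
  unfold phase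
  split
  · rename_i h
    subst h
    simp [_root_.abs_of_nonneg hb]
  · rename_i h
    have hr : (‖z‖) ≠ 0 := norm_ne_zero_iff.mpr h
    have key : z - (b:ℂ) * (z / (‖z‖ : ℂ)) =
        ((‖z‖ - b : ℝ) : ℂ) * z / (‖z‖ : ℂ) := by
      have hrc : ((‖z‖ : ℝ) : ℂ) ≠ 0 := by
        exact_mod_cast Complex.ofReal_ne_zero.mpr hr
      field_simp
      push_cast
      ring
    rw [key, norm_div, norm_mul, Complex.norm_real, Real.norm_eq_abs, Complex.norm_real, Real.norm_eq_abs,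
      _root_.abs_of_nonneg (norm_nonneg z), mul_div_assoc, div_self hr, mul_one]

lemma abs_sub_phase_le (b : ℝ) (hb : 0 ≤ b) (z u : ℂ) (hu : ‖u‖ = 1) :
    ‖(z - (b:ℂ) * phase z)‖ ≤ ‖(z - (b:ℂ) * u)‖ := by
  rw [abs_sub_phase_mul b hb z]
  have habs : ‖((b:ℂ) * u)‖ = b := by
    rw [norm_mul, hu, Complex.norm_real, Real.norm_eq_abs, _root_.abs_of_nonneg hb, mul_one]
  calc |‖z‖ - b| = |‖z‖ - ‖((b:ℂ)*u)‖| := by rw [habs]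
    _ ≤ ‖(z - (b:ℂ)*u)‖ := abs_norm_sub_norm_le _ _

lemma vnorm_nonneg {k : ℕ} (v : Fin k → ℂ) : 0 ≤ vnorm v := Real.sqrt_nonneg _

lemma sq_vnorm {k : ℕ} (v : Fin k → ℂ) : vnorm v ^ 2 = ∑ i, ‖v i‖ ^ 2 :=
  Real.sq_sqrt (Finset.sum_nonneg fun i _ => sq_nonneg _)

lemma vnorm_mono {k : ℕ} {v w : Fin k → ℂ} (h : ∀ i, ‖v i‖ ≤ ‖w i‖) :
    vnorm v ≤ vnorm w :=
  Real.sqrt_le_sqrt (Finset.sum_le_sum fun i _ => by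
    have h1 := norm_nonneg (v i); nlinarith [h i])

lemma eq_of_vnorm_sub_eq_zero {k : ℕ} {v w : Fin k → ℂ}
    (h : vnorm (fun i => v i - w i) = 0) : v = w := by
  have h2 : ∑ i, ‖v i - w i‖ ^ 2 = 0 := by
    have := sq_vnorm (fun i => v i - w i)
    rw [h] at this
    simpa using this.symm
  funext i
  have h3 := (Finset.sum_eq_zero_iff_of_nonneg (fun i _ => sq_nonneg _)).mp h2 i (Finset.mem_univ i)
  have h4 : ‖v i - w i‖ = 0 := by nlinarith [norm_nonneg (v i - w i)]
  exact sub_eq_zero.mp (norm_eq_zero.mp h4)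

lemma vnorm_sub_comm {k : ℕ} (v w : Fin k → ℂ) :
    vnorm (fun i => v i - w i) = vnorm (fun i => w i - v i) := by
  unfold vnorm
  congr 1
  exact Finset.sum_congr rfl fun i _ => by rw [norm_sub_rev]

lemma pythagoras {k : ℕ} (v w : Fin k → ℂ) (h : vinner w v = 0) :
    vnorm (fun i => v i + w i) ^ 2 = vnorm v ^ 2 + vnorm w ^ 2 := by
  rw [sq_vnorm, sq_vnorm, sq_vnorm]
  have key : ∀ i, ‖v i + w i‖ ^ 2 =
      ‖v i‖ ^ 2 + ‖w i‖ ^ 2 + 2 * (v i * conj (w i)).re := by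
    intro i
    rw [Complex.sq_norm, Complex.sq_norm, Complex.sq_norm, Complex.normSq_add]
  rw [Finset.sum_congr rfl fun i _ => key i, Finset.sum_add_distrib, Finset.sum_add_distrib]
  have h2 : ∑ i, 2 * (v i * conj (w i)).re = 0 := by
    have hsum : (∑ i, v i * conj (w i)) = 0 := by
      unfold vinner at h
      calc ∑ i, v i * conj (w i) = ∑ i, conj (w i) * v i :=
            Finset.sum_congr rfl fun i _ => mul_comm _ _
        _ = 0 := h
    rw [← Finset.mul_sum, ← Complex.re_sum, hsum]
    simp
  rw [h2, add_zero]

lemma vnorm_eq_norm {k : ℕ} (v : Fin k → ℂ) :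
    vnorm v = ‖(WithLp.equiv 2 (Fin k → ℂ)).symm v‖ := by
  rw [EuclideanSpace.norm_eq]
  unfold vnorm
  congr 1

lemma vnorm_add_le {k : ℕ} (v w : Fin k → ℂ) :
    vnorm (fun i => v i + w i) ≤ vnorm v + vnorm w := by
  rw [vnorm_eq_norm, vnorm_eq_norm, vnorm_eq_norm]
  exact norm_add_le ((WithLp.equiv 2 (Fin k → ℂ)).symm v) ((WithLp.equiv 2 (Fin k → ℂ)).symm w)

lemma continuous_vnorm {k : ℕ} : Continuous (vnorm (k := k)) := by
  unfold vnorm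
  exact Real.continuous_sqrt.comp (continuous_finset_sum _ fun i _ =>
    ((continuous_norm.comp (continuous_apply i)).pow 2))

lemma vinner_mulVec {m n : ℕ} (A : Matrix (Fin m) (Fin n) ℂ) (x : Fin n → ℂ) (w : Fin m → ℂ) :
    vinner (A.mulVec x) w = vinner x (Aᴴ.mulVec w) := by
  unfold vinner
  simp only [Matrix.mulVec, dotProduct, Matrix.conjTranspose_apply, map_sum,
    _root_.map_mul, Finset.sum_mul, Finset.mul_sum]
  rw [Finset.sum_comm]
  exact Finset.sum_congr rfl fun j _ => Finset.sum_congr rfl fun i _ => by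
    simp [Complex.star_def]; ring

end Aux

section Pinv
open Complex ComplexConjugate
open scoped ComplexOrder

lemma pinv_spec {m n : ℕ} (A : Matrix (Fin m) (Fin n) ℂ) : Aᴴ * A * pinv A = Aᴴ := by
  classical
  set H : Matrix (Fin n) (Fin n) ℂ := Aᴴ * A with hHdef
  have hH : H.IsHermitian := Matrix.isHermitian_conjTranspose_mul_self A
  have hpsd : H.PosSemidef := Matrix.posSemidef_conjTranspose_mul_self A
  set μ : Fin n → ℝ := hH.eigenvalues with hμdef
  have hμ : ∀ k, 0 ≤ μ k := fun k => hpsd.eigenvalues_nonneg k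
  set U : Matrix (Fin n) (Fin n) ℂ := (hH.eigenvectorUnitary : Matrix (Fin n) (Fin n) ℂ)
    with hUdef
  have hU1 : star U * U = 1 := Matrix.mem_unitaryGroup_iff'.mp hH.eigenvectorUnitary.2
  have hU2 : U * star U = 1 := Matrix.mem_unitaryGroup_iff.mp hH.eigenvectorUnitary.2
  have hspec : H = U * Matrix.diagonal (fun k => ((μ k : ℝ) : ℂ)) * star U := by
    have := hH.spectral_theorem
    rw [Unitary.conjStarAlgAut_apply] at this
    exact this
  have hdiagU : star U * H * U = Matrix.diagonal (fun k => ((μ k : ℝ) : ℂ)) := by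
    rw [hspec]; simp only [Matrix.mul_assoc]
    rw [hU1, Matrix.mul_one, ← Matrix.mul_assoc, hU1, Matrix.one_mul]
  have sandwich : ∀ f h : Fin n → ℂ,
      (U * Matrix.diagonal f * star U) * (U * Matrix.diagonal h * star U)
        = U * Matrix.diagonal (fun k => f k * h k) * star U := by
    intro f h
    simp only [Matrix.mul_assoc]
    rw [← Matrix.mul_assoc (star U) U (Matrix.diagonal h * star U), hU1, Matrix.one_mul,
      ← Matrix.mul_assoc (Matrix.diagonal f) (Matrix.diagonal h) (star U),
      Matrix.diagonal_mul_diagonal]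
  set C : Matrix (Fin n) (Fin m) ℂ := star U * Aᴴ with hCdef
  have hCH : Cᴴ = A * U := by
    rw [hCdef, Matrix.conjTranspose_mul, Matrix.conjTranspose_conjTranspose,
      Matrix.star_eq_conjTranspose, Matrix.conjTranspose_conjTranspose]
  have hCC : C * Cᴴ = Matrix.diagonal (fun k => ((μ k : ℝ) : ℂ)) := by
    calc C * Cᴴ = star U * H * U := by
          rw [hCH, hCdef, hHdef]; simp only [Matrix.mul_assoc]
      _ = _ := hdiagU
  have hCrow : ∀ k, μ k = 0 → ∀ j, C k j = 0 := by
    intro k hk j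
    have hdiag : (C * Cᴴ) k k = 0 := by rw [hCC]; simp [hk]
    have hsum : ∑ j, Complex.normSq (C k j) = 0 := by
      have he : (C * Cᴴ) k k = ∑ j, (Complex.normSq (C k j) : ℂ) := by
        rw [Matrix.mul_apply]
        exact Finset.sum_congr rfl fun j _ => by
          rw [Matrix.conjTranspose_apply, Complex.star_def, Complex.mul_conj]
      rw [he] at hdiag
      exact_mod_cast hdiag
    have := (Finset.sum_eq_zero_iff_of_nonneg (fun j _ => Complex.normSq_nonneg _)).mp hsum j
      (Finset.mem_univ j)
    exact Complex.normSq_eq_zero.mp this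
  set g : Fin n → ℂ := fun k => if μ k = 0 then 0 else ((μ k : ℝ) : ℂ)⁻¹ with hgdef
  have hgne : ∀ k, μ k ≠ 0 → g k = ((μ k : ℝ) : ℂ)⁻¹ := by
    intro k hk; rw [hgdef]; simp [hk]
  have hres : ∀ δ : ℝ, 0 < δ →
      (H + (δ : ℂ) • (1 : Matrix (Fin n) (Fin n) ℂ))⁻¹ * Aᴴ
        = U * Matrix.diagonal (fun k => (((μ k : ℝ) : ℂ) + (δ : ℝ))⁻¹) * C := by
    intro δ hδ
    have hne : ∀ k, (((μ k : ℝ) : ℂ) + (δ : ℝ)) ≠ 0 := by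
      intro k h0
      have h1 : ((μ k + δ : ℝ) : ℂ) = 0 := by push_cast; linear_combination h0
      have h2 : μ k + δ = 0 := by exact_mod_cast h1
      nlinarith [hμ k]
    have hform : H + (δ : ℂ) • (1 : Matrix (Fin n) (Fin n) ℂ)
        = U * Matrix.diagonal (fun k => ((μ k : ℝ) : ℂ) + (δ : ℝ)) * star U := by
      have h1 : Matrix.diagonal (fun k => ((μ k : ℝ) : ℂ) + (δ : ℝ))
          = Matrix.diagonal (fun k => ((μ k : ℝ) : ℂ))
            + (δ : ℂ) • (1 : Matrix (Fin n) (Fin n) ℂ) := by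
        rw [Matrix.smul_one_eq_diagonal, ← Matrix.diagonal_add]
      rw [h1, Matrix.mul_add, Matrix.add_mul, ← hspec]
      congr 1
      rw [Matrix.mul_smul, Matrix.mul_one, Matrix.smul_mul, hU2]
    have hinv : (H + (δ : ℂ) • (1 : Matrix (Fin n) (Fin n) ℂ))
        * (U * Matrix.diagonal (fun k => (((μ k : ℝ) : ℂ) + (δ : ℝ))⁻¹) * star U) = 1 := by
      rw [hform, sandwich]
      have h2 : (fun k => (((μ k : ℝ) : ℂ) + (δ : ℝ)) * (((μ k : ℝ) : ℂ) + (δ : ℝ))⁻¹)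
          = fun _ => (1 : ℂ) := funext fun k => mul_inv_cancel₀ (hne k)
      rw [h2, Matrix.diagonal_one, Matrix.mul_one, hU2]
    rw [Matrix.inv_eq_right_inv hinv, Matrix.mul_assoc, Matrix.mul_assoc, ← hCdef,
      ← Matrix.mul_assoc]
  have htend : Tendsto
      (fun δ : ℝ => (H + (δ : ℂ) • (1 : Matrix (Fin n) (Fin n) ℂ))⁻¹ * Aᴴ)
      (nhdsWithin (0:ℝ) (Set.Ioi 0)) (nhds (U * Matrix.diagonal g * C)) := by
    have hcong : ∀ᶠ δ in nhdsWithin (0:ℝ) (Set.Ioi 0),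
        (U * Matrix.diagonal (fun k => (((μ k : ℝ) : ℂ) + (δ : ℝ))⁻¹) * C)
          = (H + (δ : ℂ) • (1 : Matrix (Fin n) (Fin n) ℂ))⁻¹ * Aᴴ := by
      filter_upwards [self_mem_nhdsWithin] with δ hδ
      exact (hres δ hδ).symm
    apply Filter.Tendsto.congr' hcong
    refine tendsto_pi_nhds.mpr ?_
    intro i
    rw [tendsto_pi_nhds]
    intro j
    have hentry : ∀ (f : Fin n → ℂ),
        (U * Matrix.diagonal f * C) i j = ∑ k, U i k * (f k * C k j) := by
      intro f
      rw [Matrix.mul_assoc, Matrix.mul_apply]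
      exact Finset.sum_congr rfl fun k _ => by rw [Matrix.diagonal_mul]
    simp only [hentry]
    apply tendsto_finset_sum
    intro k _
    by_cases hk : μ k = 0
    · have hz : C k j = 0 := hCrow k hk j
      simp only [hz, mul_zero]
      exact tendsto_const_nhds
    · have hne : ((μ k : ℝ) : ℂ) ≠ 0 := Complex.ofReal_ne_zero.mpr hk
      have h1 : Tendsto (fun δ : ℝ => ((μ k : ℝ) : ℂ) + (δ : ℝ))
          (nhdsWithin (0:ℝ) (Set.Ioi 0)) (nhds ((μ k : ℝ) : ℂ)) := by
        have h0 : Tendsto (fun δ : ℝ => ((δ : ℝ) : ℂ)) (nhdsWithin (0:ℝ) (Set.Ioi 0))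
            (nhds 0) := by
          have := (Complex.continuous_ofReal.tendsto 0).mono_left
            (nhdsWithin_le_nhds (s := Set.Ioi (0:ℝ)))
          simpa using this
        simpa using tendsto_const_nhds.add h0
      have h2 : Tendsto (fun δ : ℝ => (((μ k : ℝ) : ℂ) + (δ : ℝ))⁻¹)
          (nhdsWithin (0:ℝ) (Set.Ioi 0)) (nhds (((μ k : ℝ) : ℂ))⁻¹) := h1.inv₀ hne
      rw [hgne k hk]
      exact tendsto_const_nhds.mul (h2.mul tendsto_const_nhds)
  have hlim : pinv A = U * Matrix.diagonal g * C := htend.limUnder_eq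
  rw [hlim, hspec]
  have e1 : U * Matrix.diagonal (fun k => ((μ k : ℝ) : ℂ)) * star U
      * (U * Matrix.diagonal g * C)
      = U * (Matrix.diagonal (fun k => ((μ k : ℝ) : ℂ) * g k)) * C := by
    simp only [Matrix.mul_assoc]
    rw [← Matrix.mul_assoc (star U) U (Matrix.diagonal g * C), hU1, Matrix.one_mul,
      ← Matrix.mul_assoc (Matrix.diagonal _) (Matrix.diagonal g) C,
      Matrix.diagonal_mul_diagonal]
  rw [e1]
  have e2 : Matrix.diagonal (fun k => ((μ k : ℝ) : ℂ) * g k) * C = C := by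
    ext k j
    rw [Matrix.diagonal_mul]
    by_cases hk : μ k = 0
    · simp [hCrow k hk j]
    · rw [hgne k hk, mul_inv_cancel₀ (Complex.ofReal_ne_zero.mpr hk), one_mul]
  rw [Matrix.mul_assoc, e2, hCdef, ← Matrix.mul_assoc, hU2, Matrix.one_mul]

lemma mulVec_P {m n : ℕ} (A : Matrix (Fin m) (Fin n) ℂ) (v : Fin m → ℂ) :
    (A * pinv A).mulVec v = A.mulVec ((pinv A).mulVec v) :=
  (Matrix.mulVec_mulVec v A (pinv A)).symm

lemma orth_P {m n : ℕ} (A : Matrix (Fin m) (Fin n) ℂ) (x : Fin n → ℂ) (v : Fin m → ℂ) :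
    vinner (A.mulVec x) (fun i => v i - (A * pinv A).mulVec v i) = 0 := by
  rw [vinner_mulVec]
  have h1 : (fun i => v i - (A * pinv A).mulVec v i) = v - (A * pinv A).mulVec v := rfl
  have h2 : Aᴴ.mulVec (v - (A * pinv A).mulVec v) = 0 := by
    rw [Matrix.mulVec_sub, Matrix.mulVec_mulVec, ← Matrix.mul_assoc, pinv_spec, sub_self]
  rw [h1, h2]
  unfold vinner
  simp

lemma proj_pyth {m n : ℕ} (A : Matrix (Fin m) (Fin n) ℂ) (v : Fin m → ℂ) (x : Fin n → ℂ) :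
    vnorm (fun i => v i - A.mulVec x i) ^ 2
      = vnorm (fun i => v i - (A * pinv A).mulVec v i) ^ 2
        + vnorm (fun i => (A * pinv A).mulVec v i - A.mulVec x i) ^ 2 := by
  have hsplit : (fun i => v i - A.mulVec x i)
      = fun i => (v i - (A * pinv A).mulVec v i)
        + ((A * pinv A).mulVec v i - A.mulVec x i) := by
    funext i; ring
  rw [hsplit]
  apply pythagoras
  have hrange : (fun i => (A * pinv A).mulVec v i - A.mulVec x i)
      = A.mulVec ((pinv A).mulVec v - x) := by
    funext i
    rw [Matrix.mulVec_sub, mulVec_P]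
    rfl
  rw [hrange]
  exact orth_P A _ v

lemma proj_le {m n : ℕ} (A : Matrix (Fin m) (Fin n) ℂ) (v : Fin m → ℂ) (x : Fin n → ℂ) :
    vnorm (fun i => v i - (A * pinv A).mulVec v i)
      ≤ vnorm (fun i => v i - A.mulVec x i) := by
  have h := proj_pyth A v x
  have h1 : vnorm (fun i => v i - (A * pinv A).mulVec v i) ^ 2
      ≤ vnorm (fun i => v i - A.mulVec x i) ^ 2 := by nlinarith [sq_nonneg (vnorm (fun i => (A * pinv A).mulVec v i - A.mulVec x i))]
  calc vnorm (fun i => v i - (A * pinv A).mulVec v i)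
      = Real.sqrt (vnorm (fun i => v i - (A * pinv A).mulVec v i) ^ 2) :=
        (Real.sqrt_sq (vnorm_nonneg _)).symm
    _ ≤ Real.sqrt (vnorm (fun i => v i - A.mulVec x i) ^ 2) := Real.sqrt_le_sqrt h1
    _ = _ := Real.sqrt_sq (vnorm_nonneg _)

end Pinv

set_option maxHeartbeats 1600000 in
/-- Proposition 1 (stagnation points of alternating projections):
for any initial vector, the sequence `y_{k+1} = (A A†)(b ⊙ phase(y_k))` is bounded, and any
accumulation point `y∞` satisfies `(A A†)(b ⊙ u) = y∞` for some `u ∈ E_phase(y∞)`;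
in particular if `y∞` has no zero entry then `(A A†)(b ⊙ phase(y∞)) = y∞`. -/
theorem stagnation_points
    (n m : ℕ) (hn : 0 < n) (hm : 0 < m)
    (A : Matrix (Fin m) (Fin n) ℂ) (b : Fin m → ℝ) (hb : ∀ i, 0 ≤ b i)
    (y : ℕ → Fin m → ℂ)
    (hy : ∀ k, y (k + 1) = (A * pinv A).mulVec (fun i => (b i : ℂ) * phase (y k i))) :
    (∃ R : ℝ, ∀ k, vnorm (y k) ≤ R) ∧
    ∀ yinf : Fin m → ℂ, MapClusterPt yinf atTop y →
      (∃ u : Fin m → ℂ, (∀ i, u i ∈ Ephase (yinf i)) ∧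
          (A * pinv A).mulVec (fun i => (b i : ℂ) * u i) = yinf) ∧
      ((∀ i, yinf i ≠ 0) →
          (A * pinv A).mulVec (fun i => (b i : ℂ) * phase (yinf i)) = yinf) := by
  classical
  set P : Matrix (Fin m) (Fin m) ℂ := A * pinv A with hPdef
  -- boundedness
  have habs_bu : ∀ (z u : ℂ), ‖u‖ = 1 → ∀ c : ℝ, 0 ≤ c →
      ‖(c * u : ℂ)‖ = c := by
    intro z u hu c hc
    rw [norm_mul, hu, Complex.norm_real, Real.norm_eq_abs, _root_.abs_of_nonneg hc, mul_one]
  have hbound : ∃ R : ℝ, ∀ k, vnorm (y k) ≤ R := by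
    set c : Fin m → ℝ := fun i => ∑ j, ‖P i j‖ * b j with hcdef
    have hc : ∀ i, 0 ≤ c i := fun i => Finset.sum_nonneg fun j _ =>
      mul_nonneg (norm_nonneg _) (hb j)
    have hstep : ∀ k, vnorm (y (k+1)) ≤ vnorm (fun i => (c i : ℂ)) := by
      intro k
      rw [hy k]
      apply vnorm_mono
      intro i
      have h2 : ‖((c i : ℂ))‖ = c i := by
        rw [Complex.norm_real, Real.norm_eq_abs, _root_.abs_of_nonneg (hc i)]
      rw [h2]
      calc ‖(P.mulVec (fun i => (b i : ℂ) * phase (y k i)) i)‖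
          = ‖(∑ j, P i j * ((b j : ℂ) * phase (y k j)))‖ := rfl
        _ ≤ ∑ j, ‖(P i j * ((b j : ℂ) * phase (y k j)))‖ :=
            norm_sum_le _ _
        _ = ∑ j, ‖P i j‖ * b j := by
            refine Finset.sum_congr rfl fun j _ => ?_
            rw [norm_mul, norm_mul, abs_phase, Complex.norm_real, Real.norm_eq_abs,
              _root_.abs_of_nonneg (hb j), mul_one]
        _ = c i := rfl
    refine ⟨max (vnorm (y 0)) (vnorm (fun i => (c i : ℂ))), fun k => ?_⟩
    cases k with
    | zero => exact le_max_left _ _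
    | succ k => exact le_trans (hstep k) (le_max_right _ _)
  refine ⟨hbound, ?_⟩
  intro yinf hcl
  -- distance function to the torus
  set D : (Fin m → ℂ) → ℝ := fun z => vnorm (fun i => z i - (b i : ℂ) * phase (z i)) with hDdef
  set d : ℕ → ℝ := fun k => D (y k) with hddef
  have hDle : ∀ (z : Fin m → ℂ) (u : Fin m → ℂ), (∀ i, ‖u i‖ = 1) →
      D z ≤ vnorm (fun i => z i - (b i : ℂ) * u i) := by
    intro z u hu
    exact vnorm_mono fun i => abs_sub_phase_le (b i) (hb i) (z i) (u i) (hu i)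
  have hrange : ∀ k, y (k+1) = A.mulVec ((pinv A).mulVec (fun i => (b i : ℂ) * phase (y k i))) := by
    intro k
    rw [hy k, ← mulVec_P]
  have hmono : ∀ k, 1 ≤ k → d (k+1) ≤ d k := by
    intro k hk
    obtain ⟨k', rfl⟩ : ∃ k', k = k' + 1 := ⟨k - 1, by omega⟩
    set wv : Fin m → ℂ := fun i => (b i : ℂ) * phase (y (k'+1) i) with hwvdef
    calc d (k'+1+1) ≤ vnorm (fun i => y (k'+1+1) i - wv i) :=
          hDle _ _ (fun i => abs_phase _)
      _ = vnorm (fun i => wv i - P.mulVec wv i) := by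
          rw [vnorm_sub_comm]
          congr 1
          funext i
          rw [hy (k'+1)]
      _ ≤ vnorm (fun i => wv i - A.mulVec ((pinv A).mulVec (fun i => (b i : ℂ) * phase (y k' i))) i) :=
          proj_le A wv _
      _ = vnorm (fun i => y (k'+1) i - wv i) := by
          rw [vnorm_sub_comm]
          congr 1
          funext i
          rw [hrange k']
      _ = d (k'+1) := rfl
  -- monotone limit
  set e : ℕ → ℝ := fun j => d (j+1) with hedef
  have hanti : Antitone e := antitone_nat_of_succ_le fun j => hmono (j+1) (by omega)
  have hbdd : BddBelow (Set.range e) := ⟨0, by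
    rintro x ⟨j, rfl⟩
    exact vnorm_nonneg _⟩
  set dl : ℝ := ⨅ j, e j with hdldef
  have htend_e : Tendsto e atTop (nhds dl) := tendsto_atTop_ciInf hanti hbdd
  have htend_d : Tendsto d atTop (nhds dl) := (tendsto_add_atTop_iff_nat 1).mp htend_e
  -- subsequence converging to yinf
  obtain ⟨φ, hφmono, hφtend⟩ := TopologicalSpace.FirstCountableTopology.tendsto_subseq hcl
  -- subsequence of phases converging
  have hqmem : ∀ j, (fun i => phase (y (φ j) i)) ∈ Metric.closedBall (0 : Fin m → ℂ) 1 := by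
    intro j
    rw [Metric.mem_closedBall, dist_zero_right]
    refine (pi_norm_le_iff_of_nonneg zero_le_one).mpr fun i => ?_
    rw [abs_phase]
  obtain ⟨u, humem, ψ, hψmono, hqψ⟩ :=
    (isCompact_closedBall (0 : Fin m → ℂ) 1).tendsto_subseq hqmem
  set χ : ℕ → ℕ := φ ∘ ψ with hχdef
  have hχmono : StrictMono χ := hφmono.comp hψmono
  have hyχ : Tendsto (fun j => y (χ j)) atTop (nhds yinf) := hφtend.comp hψmono.tendsto_atTop
  have hyχi : ∀ i, Tendsto (fun j => y (χ j) i) atTop (nhds (yinf i)) :=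
    fun i => tendsto_pi_nhds.mp hyχ i
  have hui : ∀ i, Tendsto (fun j => phase (y (χ j) i)) atTop (nhds (u i)) :=
    fun i => tendsto_pi_nhds.mp hqψ i
  have hu1 : ∀ i, ‖u i‖ = 1 := by
    intro i
    have h1 : Tendsto (fun j => ‖phase (y (χ j) i)‖) atTop
        (nhds (‖u i‖)) := (continuous_norm.tendsto (u i)).comp (hui i)
    have h2 : (fun j => ‖phase (y (χ j) i)‖) = fun _ => (1:ℝ) :=
      funext fun j => abs_phase _
    rw [h2] at h1
    exact (tendsto_nhds_unique tendsto_const_nhds h1).symm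
  have huphase : ∀ i, yinf i ≠ 0 → u i = phase (yinf i) := by
    intro i h0
    have h1 := hyχi i
    have hden : Tendsto (fun j => ((‖y (χ j) i‖ : ℝ) : ℂ)) atTop
        (nhds ((‖yinf i‖ : ℝ) : ℂ)) :=
      (Complex.continuous_ofReal.tendsto _).comp ((continuous_norm.tendsto _).comp h1)
    have hdiv : Tendsto (fun j => y (χ j) i / ((‖y (χ j) i‖ : ℝ) : ℂ)) atTop
        (nhds (yinf i / ((‖yinf i‖ : ℝ) : ℂ))) :=
      h1.div hden (Complex.ofReal_ne_zero.mpr (norm_ne_zero_iff.mpr h0))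
    have h2 : Tendsto (fun j => phase (y (χ j) i)) atTop (nhds (phase (yinf i))) := by
      rw [phase_of_ne _ h0]
      apply hdiv.congr'
      filter_upwards [h1.eventually_ne h0] with j hj
      exact (phase_of_ne _ hj).symm
    exact tendsto_nhds_unique (hui i) h2
  -- limit of the shifted subsequence
  set bu : Fin m → ℂ := fun i => (b i : ℂ) * u i with hbudef
  set wv : Fin m → ℂ := P.mulVec bu with hwvdef
  have hwtend : Tendsto (fun j => y (χ j + 1)) atTop (nhds wv) := by
    have hrw : (fun j => y (χ j + 1))
        = fun j => P.mulVec (fun i => (b i : ℂ) * phase (y (χ j) i)) :=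
      funext fun j => hy (χ j)
    rw [hrw]
    rw [tendsto_pi_nhds]
    intro i
    have : ∀ (z : Fin m → ℂ), P.mulVec z i = ∑ t, P i t * z t := fun z => rfl
    simp only [this]
    apply tendsto_finset_sum
    intro t _
    exact tendsto_const_nhds.mul (tendsto_const_nhds.mul (hui t))
  have hd_χ : Tendsto (fun j => d (χ j)) atTop (nhds dl) :=
    htend_d.comp hχmono.tendsto_atTop
  have hd_to : Tendsto (fun j => d (χ j)) atTop
      (nhds (vnorm (fun i => yinf i - bu i))) := by
    have harg : Tendsto (fun j => (fun i => y (χ j) i - (b i : ℂ) * phase (y (χ j) i))) atTop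
        (nhds (fun i => yinf i - bu i)) :=
      tendsto_pi_nhds.mpr fun i => (hyχi i).sub (tendsto_const_nhds.mul (hui i))
    exact (continuous_vnorm.tendsto _).comp harg
  have hdl1 : dl = vnorm (fun i => yinf i - bu i) := tendsto_nhds_unique hd_χ hd_to
  -- D is Lipschitz
  have hLip : ∀ z1 z2 : Fin m → ℂ, D z1 ≤ vnorm (fun i => z1 i - z2 i) + D z2 := by
    intro z1 z2
    calc D z1 ≤ vnorm (fun i => z1 i - (b i : ℂ) * phase (z2 i)) :=
          hDle z1 (fun i => phase (z2 i)) (fun i => abs_phase _)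
      _ = vnorm (fun i => (z1 i - z2 i) + (z2 i - (b i : ℂ) * phase (z2 i))) := by
          congr 1; funext i; ring
      _ ≤ vnorm (fun i => z1 i - z2 i) + D z2 := vnorm_add_le _ _
  have habsLip : ∀ z1 z2 : Fin m → ℂ, |D z1 - D z2| ≤ vnorm (fun i => z1 i - z2 i) := by
    intro z1 z2
    rw [abs_sub_le_iff]
    constructor
    · linarith [hLip z1 z2]
    · have := hLip z2 z1
      rw [vnorm_sub_comm] at this
      linarith
  have hDw : Tendsto (fun j => d (χ j + 1)) atTop (nhds (D wv)) := by
    have hto0 : Tendsto (fun j => vnorm (fun i => y (χ j + 1) i - wv i)) atTop (nhds 0) := by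
      have harg : Tendsto (fun j => (fun i => y (χ j + 1) i - wv i)) atTop
          (nhds (fun i => wv i - wv i)) :=
        tendsto_pi_nhds.mpr fun i => (tendsto_pi_nhds.mp hwtend i).sub tendsto_const_nhds
      have := (continuous_vnorm.tendsto _).comp harg
      have hz : vnorm (fun i => wv i - wv i) = 0 := by
        simp [vnorm]
      rwa [hz] at this
    have hsq : Tendsto (fun j => D (y (χ j + 1)) - D wv) atTop (nhds 0) := by
      apply squeeze_zero_norm _ hto0
      intro j
      rw [Real.norm_eq_abs]
      exact habsLip _ _
    have := hsq.add (tendsto_const_nhds (x := D wv))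
    simpa using this
  have hd_χ1 : Tendsto (fun j => d (χ j + 1)) atTop (nhds dl) :=
    htend_d.comp (tendsto_atTop_mono (fun j => Nat.le_succ (χ j)) hχmono.tendsto_atTop)
  have hDweq : D wv = dl := tendsto_nhds_unique hDw hd_χ1
  -- yinf is in the range of A
  have hyinf_range : ∃ x : Fin n → ℂ, yinf = A.mulVec x := by
    set S : Submodule ℂ (Fin m → ℂ) := LinearMap.range (Matrix.mulVecLin A) with hSdef
    have hSclosed : IsClosed (S : Set (Fin m → ℂ)) := Submodule.closed_of_finiteDimensional S
    have hmem : yinf ∈ (S : Set (Fin m → ℂ)) := by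
      apply hSclosed.mem_of_tendsto hyχ
      filter_upwards [eventually_ge_atTop 1] with j hj
      have h1 : 1 ≤ χ j := le_trans hj (hχmono.le_apply)
      obtain ⟨k', hk'⟩ : ∃ k', χ j = k' + 1 := ⟨χ j - 1, by omega⟩
      rw [hk', hrange k']
      exact ⟨_, rfl⟩
    obtain ⟨x, hx⟩ := hmem
    exact ⟨x, hx.symm⟩
  obtain ⟨x, hx⟩ := hyinf_range
  -- the equality chase
  have h1 : D wv ≤ vnorm (fun i => bu i - wv i) := by
    have := hDle wv u hu1
    rwa [vnorm_sub_comm] at this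
  have h2 : vnorm (fun i => bu i - wv i) ≤ vnorm (fun i => bu i - yinf i) := by
    have := proj_le A bu x
    rw [← hx] at this
    exact this
  have h3 : vnorm (fun i => bu i - yinf i) = dl := by
    rw [vnorm_sub_comm, hdl1]
  have h4 : vnorm (fun i => bu i - wv i) = vnorm (fun i => bu i - yinf i) := by
    have := hDweq
    nlinarith [h1, h2, h3, hDweq]
  have hpy := proj_pyth A bu x
  rw [← hx] at hpy
  have h5 : vnorm (fun i => wv i - yinf i) ^ 2 = 0 := by
    have hpy' : vnorm (fun i => bu i - yinf i) ^ 2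
        = vnorm (fun i => bu i - wv i) ^ 2 + vnorm (fun i => wv i - yinf i) ^ 2 := hpy
    rw [h4] at hpy'
    linarith
  have h6 : wv = yinf := by
    apply eq_of_vnorm_sub_eq_zero
    have := pow_eq_zero_iff (n := 2) (by norm_num) |>.mp h5
    exact this
  refine ⟨⟨u, ?_, h6⟩, ?_⟩
  · intro i
    unfold Ephase
    by_cases h0 : yinf i = 0
    · rw [if_pos h0]
      exact hu1 i
    · rw [if_neg h0]
      rw [Set.mem_singleton_iff, huphase i h0, phase_of_ne _ h0]
  · intro h0
    have : (fun i => (b i : ℂ) * phase (yinf i)) = fun i => (b i : ℂ) * u i :=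
      funext fun i => by rw [huphase i (h0 i)]
    rw [this]
    exact h6

end
end

section
/- Let Z be any real random variable such that |Z| ≤ 2 almost surely, and set σ² = Var(Z). Then for any λ ∈ ℝ⁺, E(e^{λ(Z − E(Z))}) ≤ 1 + (σ²/16)(e^{4λ} − 1 − 4λ). -/
open MeasureTheory ProbabilityTheory

lemma exp_series_eq (x : ℝ) : Real.exp x = ∑' n : ℕ, x ^ n / n.factorial := by
  rw [Real.exp_eq_exp_ℝ]
  exact congrFun NormedSpace.exp_eq_tsum_div x

set_option maxHeartbeats 800000 in
lemma pointwise_key {lam y : ℝ} (hlam : 0 ≤ lam) (hy : |y| ≤ 4) :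
    Real.exp (lam * y) ≤ 1 + lam * y + y ^ 2 / 16 * (Real.exp (4 * lam) - 1 - 4 * lam) := by
  have hfs : Summable (fun n : ℕ => (lam * y) ^ n / n.factorial) :=
    Real.summable_pow_div_factorial _
  have hcs : Summable (fun n : ℕ => y ^ 2 / 16 * ((4 * lam) ^ n / n.factorial)) :=
    (Real.summable_pow_div_factorial _).mul_left _
  set h : ℕ → ℝ := fun n =>
    if n = 0 then 1 - y ^ 2 / 16 else if n = 1 then lam * y - y ^ 2 * lam / 4 else 0 with hh
  have hhs : Summable h := by
    apply summable_of_ne_finset_zero (s := {0, 1})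
    intro n hn
    simp only [Finset.mem_insert, Finset.mem_singleton, not_or] at hn
    simp [hh, hn.1, hn.2]
  set g : ℕ → ℝ := fun n => y ^ 2 / 16 * ((4 * lam) ^ n / n.factorial) + h n with hg
  have hgs : Summable g := hcs.add hhs
  have hle : ∀ n, (lam * y) ^ n / n.factorial ≤ g n := by
    intro n
    match n with
    | 0 => simp [hg, hh]
    | 1 => simp [hg, hh]; exact le_of_eq (by ring)
    | (m + 2) =>
      have h1 : (lam * y) ^ (m + 2) ≤ y ^ 2 * 4 ^ m * lam ^ (m + 2) := by
        calc (lam * y) ^ (m + 2) ≤ |(lam * y) ^ (m + 2)| := le_abs_self _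
          _ = lam ^ (m + 2) * (|y| ^ 2 * |y| ^ m) := by
              rw [abs_pow, abs_mul, abs_of_nonneg hlam, mul_pow]; ring
          _ ≤ lam ^ (m + 2) * (|y| ^ 2 * 4 ^ m) := by
              gcongr
          _ = y ^ 2 * 4 ^ m * lam ^ (m + 2) := by rw [sq_abs]; ring
      have h2 : g (m + 2) = y ^ 2 * 4 ^ m * lam ^ (m + 2) / (m + 2).factorial := by
        have h16 : (4 * lam) ^ (m + 2) = 16 * (4 ^ m * lam ^ (m + 2)) := by
          rw [mul_pow, pow_add]; ring
        simp only [hg, hh]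
        rw [if_neg (by omega), if_neg (by omega), h16]
        ring
      rw [h2]
      gcongr
  calc Real.exp (lam * y) = ∑' n, (lam * y) ^ n / n.factorial := exp_series_eq _
    _ ≤ ∑' n, g n := Summable.tsum_le_tsum hle hfs hgs
    _ = y ^ 2 / 16 * Real.exp (4 * lam) + ∑' n, h n := by
        rw [hg, Summable.tsum_add hcs hhs, tsum_mul_left, ← exp_series_eq]
    _ = 1 + lam * y + y ^ 2 / 16 * (Real.exp (4 * lam) - 1 - 4 * lam) := by
        have : ∑' n, h n = (1 - y ^ 2 / 16) + (lam * y - y ^ 2 * lam / 4) := by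
          rw [tsum_eq_sum (s := {0, 1}) (by
            intro n hn
            simp only [Finset.mem_insert, Finset.mem_singleton, not_or] at hn
            simp [hh, hn.1, hn.2])]
          simp [hh]
        rw [this]; ring

/-- Lemma (a Bennett-type moment bound): if |Z| ≤ 2 almost surely and σ² = Var(Z), then for
every λ ≥ 0, E(e^{λ(Z − E Z)}) ≤ 1 + (σ²/16)(e^{4λ} − 1 − 4λ). -/
theorem exp_moment_bound {Ω : Type*} [MeasurableSpace Ω] (μ : Measure Ω)
    [IsProbabilityMeasure μ] (Z : Ω → ℝ) (hZ : Measurable Z)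
    (hbdd : ∀ᵐ ω ∂μ, |Z ω| ≤ 2) (lam : ℝ) (hlam : 0 ≤ lam) :
    ∫ ω, Real.exp (lam * (Z ω - ∫ ω', Z ω' ∂μ)) ∂μ ≤
      1 + variance Z μ / 16 * (Real.exp (4 * lam) - 1 - 4 * lam) := by
  set m := ∫ ω', Z ω' ∂μ with hm
  set C := Real.exp (4 * lam) - 1 - 4 * lam with hC
  have hnormbd : ∀ᵐ ω ∂μ, ‖Z ω‖ ≤ 2 := by
    filter_upwards [hbdd] with ω h using by rwa [Real.norm_eq_abs]
  have hZint : Integrable Z μ :=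
    Integrable.mono' (integrable_const (2:ℝ)) hZ.aestronglyMeasurable hnormbd
  have hmabs : |m| ≤ 2 := by
    calc |m| ≤ ∫ ω, |Z ω| ∂μ := by
          rw [hm]; exact (norm_integral_le_integral_norm Z)
      _ ≤ ∫ _ω, (2:ℝ) ∂μ := integral_mono_ae hZint.abs (integrable_const _) hbdd
      _ = 2 := by simp
  have hY : ∀ᵐ ω ∂μ, |Z ω - m| ≤ 4 := by
    filter_upwards [hbdd] with ω h
    calc |Z ω - m| ≤ |Z ω| + |m| := abs_sub _ _
      _ ≤ 2 + 2 := add_le_add h hmabs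
      _ = 4 := by norm_num
  have hZ2 : MemLp Z 2 μ := MemLp.of_bound hZ.aestronglyMeasurable 2 hnormbd
  have hYm : MemLp (fun ω => Z ω - m) 2 μ := hZ2.sub (memLp_const m)
  have hYsq : Integrable (fun ω => (Z ω - m) ^ 2) μ := hYm.integrable_sq
  have hvar : variance Z μ = ∫ ω, (Z ω - m) ^ 2 ∂μ := by
    rw [variance_eq_integral hZ.aemeasurable]
  have hexpInt : Integrable (fun ω => Real.exp (lam * (Z ω - m))) μ := by
    refine Integrable.mono' (integrable_const (Real.exp (4 * lam))) ?_ ?_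
    · exact (Real.measurable_exp.comp
        (measurable_const.mul (hZ.sub measurable_const))).aestronglyMeasurable
    · filter_upwards [hY] with ω h
      rw [Real.norm_eq_abs, abs_of_pos (Real.exp_pos _)]
      apply Real.exp_le_exp.2
      calc lam * (Z ω - m) ≤ lam * 4 := by
            have := (abs_le.1 h).2
            exact mul_le_mul_of_nonneg_left this hlam
        _ = 4 * lam := by ring
  have hgInt : Integrable (fun ω => 1 + lam * (Z ω - m) + (Z ω - m) ^ 2 * (C / 16)) μ := by
    exact ((integrable_const 1).add (((hZint.sub (integrable_const m)).const_mul lam))).add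
      (hYsq.mul_const _)
  have hpt : ∀ᵐ ω ∂μ, Real.exp (lam * (Z ω - m)) ≤
      1 + lam * (Z ω - m) + (Z ω - m) ^ 2 * (C / 16) := by
    filter_upwards [hY] with ω h
    have := pointwise_key hlam h
    rw [hC]
    linarith [this]
  calc ∫ ω, Real.exp (lam * (Z ω - m)) ∂μ
      ≤ ∫ ω, (1 + lam * (Z ω - m) + (Z ω - m) ^ 2 * (C / 16)) ∂μ :=
        integral_mono_ae hexpInt hgInt hpt
    _ = 1 + variance Z μ / 16 * C := by
        have hl1 : Integrable (fun ω => lam * (Z ω - m)) μ :=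
          (hZint.sub (integrable_const m)).const_mul lam
        have hf1 : Integrable (fun ω => 1 + lam * (Z ω - m)) μ := (integrable_const 1).add hl1
        have hf2 : Integrable (fun ω => (Z ω - m) ^ 2 * (C / 16)) μ := hYsq.mul_const _
        rw [integral_add hf1 hf2, integral_add (integrable_const 1) hl1,
            integral_const, integral_mul_const, MeasureTheory.integral_const_mul,
            integral_sub hZint (integrable_const m), integral_const]
        simp [← hvar, ← hm]
        ring
end
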